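/- arXiv:2211.17103 — 10 statements merged into one kernel-verified Lean document; each statement's English description precedes it below -/
import Mathlib

section
/- Let p be an odd prime and n, k positive integers such that n/gcd(k,n) is odd. Then the F_p-linear map φ_1 : F_{p^n} → F_{p^n}, x ↦ x^{p^k} + x, is injective (equivalently, the kernel of x ↦ x^{p^k} + x over F_{p^n} is trivial). -/
theorem stmt_4 (p n k : ℕ) [Fact p.Prime] (hp : Odd p) (hn : 0 < n) (hk : 0 < k)
    (hodd : Odd (n / Nat.gcd k n)) :
    Function.Injective (fun x : GaloisField p n => x ^ p ^ k + x) := by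
  haveI : Fintype (GaloisField p n) := Fintype.ofFinite _
  have hcard : Fintype.card (GaloisField p n) = p ^ n := by
    rw [← Nat.card_eq_fintype_card]; exact GaloisField.card p n hn.ne'
  let f : GaloisField p n →+ GaloisField p n :=
    { toFun := fun x => x ^ p ^ k + x
      map_zero' := by simp [zero_pow, (pow_pos (Fact.out : p.Prime).pos k).ne', (Fact.out : p.Prime).ne_zero]
      map_add' := by
        intro a b
        show (a + b) ^ p ^ k + (a + b) = _
        rw [add_pow_char_pow]; ring }
  show Function.Injective f
  rw [injective_iff_map_eq_zero]
  intro x hx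
  have hx' : x ^ p ^ k = -x := by
    have : x ^ p ^ k + x = 0 := hx
    linear_combination this
  -- iterate
  have hpodd : Odd (p ^ k) := hp.pow
  have key : ∀ m : ℕ, x ^ p ^ (m * k) = (-1) ^ m * x := by
    intro m
    induction m with
    | zero => simp
    | succ m ih =>
      have : x ^ p ^ ((m + 1) * k) = (x ^ p ^ (m * k)) ^ p ^ k := by
        rw [← pow_mul, ← pow_add, add_mul, one_mul]
      rw [this, ih, mul_pow, hx']
      have h1 : ((-1 : GaloisField p n) ^ m) ^ p ^ k = (-1) ^ m := by
        rcases Nat.even_or_odd m with h | h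
        · rw [h.neg_one_pow]; simp
        · rw [h.neg_one_pow, hpodd.neg_one_pow]
      rw [h1, pow_succ]
      ring
  have hfix : ∀ t : ℕ, x ^ p ^ (n * t) = x := by
    intro t
    induction t with
    | zero => simp
    | succ t ih =>
      have : x ^ p ^ (n * (t + 1)) = (x ^ p ^ (n * t)) ^ p ^ n := by
        rw [← pow_mul, ← pow_add, mul_add, mul_one]
      rw [this, ih, ← hcard, FiniteField.pow_card]
  set d := Nat.gcd k n with hd
  have hmul : (n / d) * k = n * (k / d) := by
    have h1 : d ∣ k := Nat.gcd_dvd_left k n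
    have h2 : d ∣ n := Nat.gcd_dvd_right k n
    have hd0 : 0 < d := Nat.gcd_pos_of_pos_left n hk
    obtain ⟨a, ha⟩ := h1
    obtain ⟨b, hb⟩ := h2
    rw [ha, hb, Nat.mul_div_cancel_left _ hd0, Nat.mul_div_cancel_left _ hd0]
    ring
  have := key (n / d)
  rw [hmul, hfix, hodd.neg_one_pow] at this
  -- x = -x
  have h2 : (2 : GaloisField p n) ≠ 0 := by
    have hchar : CharP (GaloisField p n) p := inferInstance
    intro h
    have := (CharP.cast_eq_zero_iff (GaloisField p n) p 2).mp (by exact_mod_cast h)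
    have hp2 : p ≠ 2 := by
      rintro rfl; exact (by decide : ¬ Odd 2) hp
    exact hp2 ((Nat.prime_dvd_prime_iff_eq Fact.out Nat.prime_two).mp this)
  have : (2 : GaloisField p n) * x = 0 := by linear_combination this
  rcases mul_eq_zero.mp this with h | h
  · exact absurd h h2
  · exact h
end

section
/- Let p be an odd prime, n, k positive integers with d := n/gcd(k,n) odd, and α ∈ F_{p^n}^*. Then the map φ_α : F_{p^n} → F_{p^n}, x ↦ α x^{p^k} + α^{p^k} x, is a bijection whose inverse is given by x ↦ (α/2) · Σ_{i=0}^{d-1} (-1)^i α^{-(p^k+1) p^{ki}} x^{p^{ki}}. -/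
theorem stmt_5 (p n k : ℕ) [Fact p.Prime] (hp : Odd p) (hn : 0 < n) (hk : 0 < k)
    (hodd : Odd (n / Nat.gcd k n)) (α : GaloisField p n) (hα : α ≠ 0) :
    Function.Bijective (fun x : GaloisField p n => α * x ^ p ^ k + α ^ p ^ k * x) ∧
    ∀ x : GaloisField p n,
      (α * ((α / 2) * ∑ i ∈ Finset.range (n / Nat.gcd k n),
          (-1) ^ i * α⁻¹ ^ ((p ^ k + 1) * p ^ (k * i)) * x ^ p ^ (k * i)) ^ p ^ k +
        α ^ p ^ k * ((α / 2) * ∑ i ∈ Finset.range (n / Nat.gcd k n),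
          (-1) ^ i * α⁻¹ ^ ((p ^ k + 1) * p ^ (k * i)) * x ^ p ^ (k * i)) = x) ∧
      ((α / 2) * ∑ i ∈ Finset.range (n / Nat.gcd k n),
          (-1) ^ i * α⁻¹ ^ ((p ^ k + 1) * p ^ (k * i)) *
            (α * x ^ p ^ k + α ^ p ^ k * x) ^ p ^ (k * i) = x) := by
  classical
  have hpp : p.Prime := Fact.out
  haveI : Fintype (GaloisField p n) := Fintype.ofFinite _
  set d := n / Nat.gcd k n with hd'
  have hqodd : Odd (p ^ k) := hp.pow
  have hdvd : n ∣ k * d := by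
    have h1 : Nat.gcd k n * (n / Nat.gcd k n) = n := Nat.mul_div_cancel' (Nat.gcd_dvd_right k n)
    obtain ⟨c, hc⟩ := Nat.gcd_dvd_left k n
    exact ⟨c, by rw [hc, mul_comm (Nat.gcd k n) c, mul_assoc, hd', h1, mul_comm]⟩
  have hcard : Fintype.card (GaloisField p n) = p ^ n := by
    rw [← Nat.card_eq_fintype_card]; exact GaloisField.card p n hn.ne'
  have hfix : ∀ y : GaloisField p n, y ^ p ^ (k * d) = y := by
    obtain ⟨m, hm⟩ := hdvd
    intro y
    rw [hm, pow_mul, ← hcard]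
    exact FiniteField.pow_card_pow m y
  have h2q : (2 : GaloisField p n) ^ p ^ k = 2 := by
    rw [← iterateFrobenius_def]
    exact map_ofNat (iterateFrobenius (GaloisField p n) p k) 2
  have h2 : (2 : GaloisField p n) ≠ 0 := by
    intro h
    have h2' : ((2 : ℕ) : GaloisField p n) = 0 := by exact_mod_cast h
    have := (CharP.cast_eq_zero_iff (GaloisField p n) p 2).mp h2'
    have hp2 : p = 2 := (Nat.prime_dvd_prime_iff_eq hpp Nat.prime_two).mp this
    rw [hp2] at hp
    exact (by norm_num : ¬ Odd 2) hp
  have hfrobsum : ∀ f : ℕ → GaloisField p n,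
      (∑ i ∈ Finset.range d, f i) ^ p ^ k = ∑ i ∈ Finset.range d, (f i) ^ p ^ k := by
    intro f
    have h := map_sum (iterateFrobenius (GaloisField p n) p k) f (Finset.range d)
    simp only [iterateFrobenius_def] at h
    exact h
  -- the key computation
  have key : ∀ x : GaloisField p n,
      α * ((α / 2) * ∑ i ∈ Finset.range d,
          (-1) ^ i * α⁻¹ ^ ((p ^ k + 1) * p ^ (k * i)) * x ^ p ^ (k * i)) ^ p ^ k +
        α ^ p ^ k * ((α / 2) * ∑ i ∈ Finset.range d,
          (-1) ^ i * α⁻¹ ^ ((p ^ k + 1) * p ^ (k * i)) * x ^ p ^ (k * i)) = x := by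
    intro x
    set c : ℕ → GaloisField p n :=
      fun i => α⁻¹ ^ ((p ^ k + 1) * p ^ (k * i)) * x ^ p ^ (k * i) with hc
    have hcsucc : ∀ i, (c i) ^ p ^ k = c (i + 1) := by
      intro i
      have e0 : p ^ (k * i) * p ^ k = p ^ (k * (i + 1)) := by
        rw [Nat.mul_succ, pow_add]
      simp only [hc]
      rw [mul_pow, ← pow_mul, ← pow_mul, mul_assoc, e0]
    have hS : (∑ i ∈ Finset.range d,
        (-1) ^ i * α⁻¹ ^ ((p ^ k + 1) * p ^ (k * i)) * x ^ p ^ (k * i))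
        = ∑ i ∈ Finset.range d, (-1) ^ i * c i := by
      simp only [hc]
      exact Finset.sum_congr rfl fun i _ => mul_assoc _ _ _
    rw [hS]
    have hSq : (∑ i ∈ Finset.range d, (-1) ^ i * c i) ^ p ^ k
        = ∑ i ∈ Finset.range d, (-1) ^ i * c (i + 1) := by
      rw [hfrobsum]
      refine Finset.sum_congr rfl fun i _ => ?_
      rw [mul_pow, hcsucc i, ← pow_mul, mul_comm i (p ^ k), pow_mul, hqodd.neg_one_pow]
    calc α * ((α / 2) * ∑ i ∈ Finset.range d, (-1) ^ i * c i) ^ p ^ k +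
          α ^ p ^ k * ((α / 2) * ∑ i ∈ Finset.range d, (-1) ^ i * c i)
        = α ^ p ^ k * α / 2 *
          ((∑ i ∈ Finset.range d, (-1) ^ i * c (i + 1)) +
            ∑ i ∈ Finset.range d, (-1) ^ i * c i) := by
          rw [mul_pow, div_pow, h2q, hSq]; ring
      _ = α ^ p ^ k * α / 2 *
          (∑ i ∈ Finset.range d,
            ((fun j => (-1) ^ j * c j) i - (fun j => (-1) ^ j * c j) (i + 1))) := by
          congr 1
          rw [← Finset.sum_add_distrib]
          refine Finset.sum_congr rfl fun i _ => ?_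
          simp only []
          rw [pow_succ]
          ring
      _ = α ^ p ^ k * α / 2 * ((-1) ^ 0 * c 0 - (-1) ^ d * c d) := by
          rw [Finset.sum_range_sub' (fun j => (-1) ^ j * c j) d]
      _ = x := by
          have hc0 : c 0 = α⁻¹ ^ (p ^ k + 1) * x := by
            simp [hc]
          have hcd : c d = α⁻¹ ^ (p ^ k + 1) * x := by
            simp only [hc]
            rw [mul_comm (p ^ k + 1) (p ^ (k * d)), pow_mul, hfix, hfix]
          rw [hc0, hcd, hodd.neg_one_pow, pow_zero]
          rw [inv_pow]
          have hαq : α ^ (p ^ k + 1) ≠ 0 := pow_ne_zero _ hα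
          field_simp
          ring
  have hsurj : Function.Surjective
      (fun x : GaloisField p n => α * x ^ p ^ k + α ^ p ^ k * x) :=
    fun y => ⟨_, key y⟩
  have hbij := Finite.surjective_iff_bijective.mp hsurj
  refine ⟨hbij, fun x => ⟨key x, ?_⟩⟩
  exact hbij.injective (key (α * x ^ p ^ k + α ^ p ^ k * x))
end

section
/- Let p be an odd prime, n, k positive integers with n/gcd(k,n) odd, and α, β ∈ F_{p^n}^*. Let φ_γ(x) = γ x^{p^k} + γ^{p^k} x for γ ∈ F_{p^n}. Then for all x ∈ F_{p^n}: φ_β(φ_α^{-1}(x)) = (β^{p^k} − α^{p^k−1} β) · φ_α^{-1}(x) + α^{-1} β · x. -/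
theorem stmt_6 (p n k : ℕ) [Fact p.Prime] (hp : Odd p) (hn : 0 < n) (hk : 0 < k)
    (hodd : Odd (n / Nat.gcd k n)) (α β : GaloisField p n) (hα : α ≠ 0) (hβ : β ≠ 0)
    (ψ : GaloisField p n → GaloisField p n)
    (hψ1 : ∀ x, α * (ψ x) ^ p ^ k + α ^ p ^ k * ψ x = x)
    (hψ2 : ∀ x, ψ (α * x ^ p ^ k + α ^ p ^ k * x) = x) :
    ∀ x : GaloisField p n,
      β * (ψ x) ^ p ^ k + β ^ p ^ k * ψ x =
        (β ^ p ^ k - α ^ (p ^ k - 1) * β) * ψ x + α⁻¹ * β * x := by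
  intro x
  have h1 : p ^ k = (p ^ k - 1) + 1 := by
    have : 0 < p ^ k := pow_pos (Fact.out (p := p.Prime)).pos k
    omega
  have h := hψ1 x
  rw [h1, pow_succ] at h ⊢
  field_simp
  rw [Nat.add_sub_cancel]
  linear_combination β * h
end

section
/- Let p be an odd prime, n, k positive integers with n/gcd(k,n) odd, and let α, β ∈ F_{p^n} with α ≠ 0. Let φ_γ(x) = γ x^{p^k} + γ^{p^k} x. If α^{-1} β ∈ F_{p^{gcd(k,n)}}, then φ_β ∘ φ_α^{-1} equals the map x ↦ α^{-1} β · x. -/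
lemma fix_iter {R : Type*} [CommRing R] (c : R) (q m : ℕ) (h : c ^ q = c) :
    c ^ q ^ m = c := by
  induction m with
  | zero => simp
  | succ m ih => rw [pow_succ, pow_mul, ih, h]

theorem stmt_8 (p n k : ℕ) [Fact p.Prime] (hp : Odd p) (hn : 0 < n) (hk : 0 < k)
    (hodd : Odd (n / Nat.gcd k n)) (α β : GaloisField p n) (hα : α ≠ 0)
    (hmem : (α⁻¹ * β) ^ p ^ Nat.gcd k n = α⁻¹ * β)
    (ψ : GaloisField p n → GaloisField p n)
    (hψ1 : ∀ x, α * (ψ x) ^ p ^ k + α ^ p ^ k * ψ x = x)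
    (hψ2 : ∀ x, ψ (α * x ^ p ^ k + α ^ p ^ k * x) = x) :
    ∀ x : GaloisField p n,
      β * (ψ x) ^ p ^ k + β ^ p ^ k * ψ x = α⁻¹ * β * x := by
  intro x
  set c := α⁻¹ * β with hc
  have hck : c ^ p ^ k = c := by
    obtain ⟨m, hm⟩ : Nat.gcd k n ∣ k := Nat.gcd_dvd_left k n
    rw [hm, pow_mul]; exact fix_iter _ _ _ hmem
  have hβ : β = c * α := by
    rw [hc, mul_comm, mul_inv_cancel_left₀ hα]
  have hβk : β ^ p ^ k = c * α ^ p ^ k := by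
    rw [hβ, mul_pow, hck]
  calc β * (ψ x) ^ p ^ k + β ^ p ^ k * ψ x
      = c * (α * (ψ x) ^ p ^ k + α ^ p ^ k * ψ x) := by rw [hβk, hβ]; ring
    _ = c * x := by rw [hψ1]
end

section
/- Let p be an odd prime, n, k positive integers with n/gcd(k,n) odd, and let α, β ∈ F_{p^n}^* with α^{-1} β ∉ F_{p^{gcd(k,n)}}. Define φ_γ(x) = γ x^{p^k} + γ^{p^k} x and ψ(x) = α^{p^k} · φ_α( x / (β^{p^k} − α^{p^k−1} β) ). Then ψ is a well-defined bijective F_p-linear map and ψ ∘ φ_β ∘ φ_α^{-1} ∘ ψ^{-1} equals the map x ↦ (α^{-1} β)^{p^k} · x. -/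
theorem stmt_9 (p n k : ℕ) [Fact p.Prime] (hp : Odd p) (hn : 0 < n) (hk : 0 < k)
    (hodd : Odd (n / Nat.gcd k n)) (α β : GaloisField p n) (hα : α ≠ 0) (hβ : β ≠ 0)
    (hmem : ¬ (α⁻¹ * β) ^ p ^ Nat.gcd k n = α⁻¹ * β)
    (ψα : GaloisField p n → GaloisField p n)
    (hψα1 : ∀ x, α * (ψα x) ^ p ^ k + α ^ p ^ k * ψα x = x)
    (hψα2 : ∀ x, ψα (α * x ^ p ^ k + α ^ p ^ k * x) = x) :
    β ^ p ^ k - α ^ (p ^ k - 1) * β ≠ 0 ∧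
    ∀ ψ : GaloisField p n → GaloisField p n,
      (∀ x, ψ x = α ^ p ^ k *
          (α * (x / (β ^ p ^ k - α ^ (p ^ k - 1) * β)) ^ p ^ k +
            α ^ p ^ k * (x / (β ^ p ^ k - α ^ (p ^ k - 1) * β)))) →
      (∀ x y, ψ (x + y) = ψ x + ψ y) ∧
      (∀ (c : ZMod p) (x : GaloisField p n), ψ (c • x) = c • ψ x) ∧
      Function.Bijective ψ ∧
      ∀ x : GaloisField p n,
        ψ (β * (ψα x) ^ p ^ k + β ^ p ^ k * ψα x) = (α⁻¹ * β) ^ p ^ k * ψ x := by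
  have hppos : 0 < p := (Fact.out : p.Prime).pos
  have hq1 : 1 ≤ p ^ k := Nat.one_le_pow _ _ hppos
  have hαq : α ^ p ^ k ≠ 0 := pow_ne_zero _ hα
  have hsub : α ^ (p ^ k - 1) = α ^ p ^ k * α⁻¹ := by
    rw [pow_sub₀ α hα hq1, pow_one]
  haveI : Fintype (GaloisField p n) := Fintype.ofFinite _
  have hcard : Fintype.card (GaloisField p n) = p ^ n := by
    rw [← Nat.card_eq_fintype_card]; exact GaloisField.card p n hn.ne'
  have hfrobn : ∀ x : GaloisField p n, x ^ p ^ n = x := by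
    intro x; rw [← hcard]; exact FiniteField.pow_card x
  obtain ⟨a, b, hab⟩ : ∃ a b : ℕ, a * k = Nat.gcd k n + b * n := by
    have hbez : (Nat.gcd k n : ℤ) = k * Nat.gcdA k n + n * Nat.gcdB k n := Nat.gcd_eq_gcd_ab k n
    set A := Nat.gcdA k n
    set B := Nat.gcdB k n
    set m : ℕ := A.natAbs + B.natAbs + 1 with hm
    have hAabs : |A| ≤ (m:ℤ) := by
      rw [Int.abs_eq_natAbs]; exact_mod_cast (by omega : A.natAbs ≤ m)
    have hBabs : |B| ≤ (m:ℤ) := by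
      rw [Int.abs_eq_natAbs]; exact_mod_cast (by omega : B.natAbs ≤ m)
    obtain ⟨hA1, hA2⟩ := abs_le.mp hAabs
    obtain ⟨hB1, hB2⟩ := abs_le.mp hBabs
    have hn1 : (1:ℤ) ≤ n := by exact_mod_cast hn
    have hk1 : (1:ℤ) ≤ k := by exact_mod_cast hk
    have haZ : (0:ℤ) ≤ A + m * n := by nlinarith
    have hbZ : (0:ℤ) ≤ m * k - B := by nlinarith
    refine ⟨(A + m * n).toNat, (m * k - B).toNat, ?_⟩
    have : ((A + m * n).toNat : ℤ) * k = Nat.gcd k n + ((m * k - B).toNat : ℤ) * n := by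
      rw [Int.toNat_of_nonneg haZ, Int.toNat_of_nonneg hbZ, hbez]; ring
    exact_mod_cast this
  have hgcd : ∀ x : GaloisField p n, x ^ p ^ k = x → x ^ p ^ Nat.gcd k n = x := by
    intro x hx
    have hmulk : ∀ a : ℕ, x ^ p ^ (a * k) = x := by
      intro a; induction a with
      | zero => simp
      | succ a ih => rw [Nat.succ_mul, pow_add, pow_mul, ih, hx]
    have hmuln : ∀ b : ℕ, x ^ p ^ (b * n) = x := by
      intro b; induction b with
      | zero => simp
      | succ b ih => rw [Nat.succ_mul, pow_add, pow_mul, ih, hfrobn]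
    have := hmulk a
    rwa [hab, add_comm, pow_add, pow_mul, hmuln b] at this
  have hD : β ^ p ^ k - α ^ (p ^ k - 1) * β ≠ 0 := by
    intro h
    apply hmem
    apply hgcd
    have hβq : β ^ p ^ k = α ^ p ^ k * α⁻¹ * β := by
      have := sub_eq_zero.mp h; rw [hsub] at this; exact this
    rw [mul_pow, hβq, inv_pow]
    field_simp
  refine ⟨hD, ?_⟩
  intro ψ hψ
  set D := β ^ p ^ k - α ^ (p ^ k - 1) * β with hDdef
  have hpow : ∀ u v : GaloisField p n, (u + v) ^ p ^ k = u ^ p ^ k + v ^ p ^ k :=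
    fun u v => add_pow_char_pow u v p k
  refine ⟨?_, ?_, ?_, ?_⟩
  · intro x y
    rw [hψ, hψ, hψ, add_div, hpow]; ring
  · intro c x
    rw [hψ, hψ, Algebra.smul_def, Algebra.smul_def]
    have hc : c ^ p ^ k = c := by
      have := FiniteField.pow_card_pow (K := ZMod p) k c
      rwa [ZMod.card] at this
    rw [mul_div_assoc, mul_pow, ← map_pow, hc]; ring
  · apply Function.bijective_iff_has_inverse.mpr
    refine ⟨fun x => D * ψα (x / α ^ p ^ k), ?_, ?_⟩
    · intro x
      show D * ψα (ψ x / α ^ p ^ k) = x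
      rw [hψ x, mul_div_cancel_left₀ _ hαq, hψα2 (x / D), mul_comm, div_mul_cancel₀ x hD]
    · intro x
      show ψ (D * ψα (x / α ^ p ^ k)) = x
      rw [hψ, mul_div_cancel_left₀ _ hD, hψα1 (x / α ^ p ^ k), mul_comm,
        div_mul_cancel₀ x hαq]
  · intro x
    have hx := hψα1 x
    set y := ψα x with hy
    rw [hψ, hψ, ← hx]
    have hDval : D = (α * β ^ p ^ k - α ^ p ^ k * β) * α⁻¹ := by
      rw [hDdef, hsub]; field_simp
    have hE : α * β ^ p ^ k - α ^ p ^ k * β ≠ 0 := by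
      intro h; exact hD (by rw [hDval, h, zero_mul])
    rw [hDval]
    have hEpow : (α * β ^ p ^ k - α ^ p ^ k * β) ^ p ^ k
        = α ^ p ^ k * (β ^ p ^ k) ^ p ^ k - (α ^ p ^ k) ^ p ^ k * β ^ p ^ k := by
      rw [sub_pow_char_pow, mul_pow, mul_pow]
    simp only [div_pow, hpow, mul_pow, inv_pow]
    field_simp
    simp only [pow_mul, hEpow]
    ring
end

section
/- Let p be an odd prime and n, k positive integers such that the function x ↦ x^{p^k+1} is planar on F_{p^n} (equivalently n/gcd(k,n) is odd). Then the image of the map F_{p^n} → F_{p^n}, x ↦ x^{p^k+1}, is exactly the set of squares of F_{p^n} (including 0), and this map is 2-to-1 on F_{p^n}^*. -/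
lemma aux_gcd (p n k : ℕ) (hp : Odd p) (hp1 : 1 < p) (hn : 0 < n) (hk : 0 < k)
    (hodd : Odd (n / Nat.gcd k n)) : Nat.gcd (p ^ k + 1) (p ^ n - 1) = 2 := by
  set d := Nat.gcd k n with hd
  have hd0 : 0 < d := Nat.gcd_pos_of_pos_right k hn
  have hdk : d ∣ k := Nat.gcd_dvd_left k n
  have hdn : d ∣ n := Nat.gcd_dvd_right k n
  have hns : n = d * (n / d) := (Nat.mul_div_cancel' hdn).symm
  have hkk : k = d * (k / d) := (Nat.mul_div_cancel' hdk).symm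
  have hcop : Nat.Coprime (k / d) (n / d) := Nat.coprime_div_gcd_div_gcd hd0
  have h2s : Nat.Coprime 2 (n / d) := Nat.coprime_two_left.mpr hodd
  have hg : Nat.gcd (2 * k) n = d := by
    have e1 : 2 * k = d * (2 * (k / d)) := by
      conv_lhs => rw [hkk]
      ring
    rw [e1]
    conv_lhs => rw [hns]
    rw [Nat.gcd_mul_left, h2s.gcd_mul_left_cancel (k / d), hcop, mul_one]
  have h2pk : 2 ∣ p ^ k + 1 := (hp.pow).add_one.two_dvd
  have h2pn : 2 ∣ p ^ n - 1 := (Nat.Odd.sub_odd (hp.pow) odd_one).two_dvd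
  have h2G : 2 ∣ Nat.gcd (p ^ k + 1) (p ^ n - 1) := Nat.dvd_gcd h2pk h2pn
  set G := Nat.gcd (p ^ k + 1) (p ^ n - 1) with hG
  have hGm : ((p ^ k + 1 : ℕ) : ZMod G) = 0 :=
    (ZMod.natCast_eq_zero_iff _ _).mpr (Nat.gcd_dvd_left _ _)
  have hGn : ((p ^ n - 1 : ℕ) : ZMod G) = 0 :=
    (ZMod.natCast_eq_zero_iff _ _).mpr (Nat.gcd_dvd_right _ _)
  have h1pn : 1 ≤ p ^ n := Nat.one_le_pow _ _ (by omega)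
  have hpk : (p : ZMod G) ^ k = -1 := by
    push_cast at hGm; linear_combination hGm
  have hpn : (p : ZMod G) ^ n = 1 := by
    rw [Nat.cast_sub h1pn] at hGn; push_cast at hGn; linear_combination hGn
  have h2k : (p : ZMod G) ^ (2 * k) = 1 := by
    rw [mul_comm, pow_mul, hpk, neg_one_sq]
  have hgd : (p : ZMod G) ^ d = 1 := by
    have := pow_gcd_eq_one.mpr ⟨h2k, hpn⟩
    rwa [hg] at this
  have hk1 : (p : ZMod G) ^ k = 1 := by
    rw [hkk, pow_mul, hgd, one_pow]
  have h2z : ((2 : ℕ) : ZMod G) = 0 := by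
    push_cast
    linear_combination hpk - hk1
  have G2 : G ∣ 2 := (ZMod.natCast_eq_zero_iff _ _).mp h2z
  exact Nat.dvd_antisymm G2 h2G

theorem stmt_11 (p n k : ℕ) [Fact p.Prime] (hp : Odd p) (hn : 0 < n) (hk : 0 < k)
    (hodd : Odd (n / Nat.gcd k n)) :
    Set.range (fun x : GaloisField p n => x ^ (p ^ k + 1)) =
      {y : GaloisField p n | ∃ x, x ^ 2 = y} ∧
    ∀ y : GaloisField p n, y ≠ 0 → (∃ x, x ^ (p ^ k + 1) = y) →
      Set.ncard {x : GaloisField p n | x ^ (p ^ k + 1) = y} = 2 := by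
  have hp1 : 1 < p := (Fact.out : p.Prime).one_lt
  have hgcd : Nat.gcd (p ^ k + 1) (p ^ n - 1) = 2 := aux_gcd p n k hp hp1 hn hk hodd
  haveI : Fintype (GaloisField p n) := Fintype.ofFinite _
  have hq : Fintype.card (GaloisField p n) = p ^ n := by
    rw [← Nat.card_eq_fintype_card]; exact GaloisField.card p n hn.ne'
  have heven : Even (p ^ k + 1) := (hp.pow).add_one
  have hm0 : p ^ k + 1 ≠ 0 := by positivity
  have h2F : (2 : GaloisField p n) ≠ 0 := by
    have h22 : ((2 : ℕ) : GaloisField p n) ≠ 0 := by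
      rw [Ne, CharP.cast_eq_zero_iff (GaloisField p n) p]
      intro hdvd
      have h2 := Nat.le_of_dvd two_pos hdvd
      have hpm := Nat.odd_iff.mp hp
      omega
    simpa using h22
  constructor
  · ext y
    simp only [Set.mem_range, Set.mem_setOf_eq]
    constructor
    · rintro ⟨x, rfl⟩
      obtain ⟨t, ht⟩ := heven
      exact ⟨x ^ t, by rw [← pow_mul]; congr 1; omega⟩
    · rintro ⟨z, rfl⟩
      by_cases hz : z = 0
      · exact ⟨0, by rw [hz, zero_pow hm0, zero_pow two_ne_zero]⟩
      set u : (GaloisField p n)ˣ := Units.mk0 z hz with hu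
      have hu1 : u ^ (p ^ n - 1) = 1 := by
        apply Units.ext
        rw [Units.val_pow_eq_pow_val, Units.val_one, hu, Units.val_mk0, ← hq]
        exact FiniteField.pow_card_sub_one_eq_one z hz
      set A := Nat.gcdA (p ^ k + 1) (p ^ n - 1) with hA
      set B := Nat.gcdB (p ^ k + 1) (p ^ n - 1) with hB
      have hbez : (2 : ℤ) = (p ^ k + 1 : ℕ) * A + ((p ^ n - 1 : ℕ) : ℤ) * B := by
        have hb := Nat.gcd_eq_gcd_ab (p ^ k + 1) (p ^ n - 1)
        rw [hgcd] at hb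
        exact_mod_cast hb
      have key : (u ^ A) ^ (p ^ k + 1) = u ^ 2 := by
        have h1 : (u ^ A) ^ ((p ^ k + 1 : ℕ) : ℤ) * (u ^ (p ^ n - 1)) ^ B = u ^ (2 : ℤ) := by
          rw [← zpow_natCast u (p ^ n - 1), ← zpow_mul, ← zpow_mul, ← zpow_add u]
          rw [show A * ((p ^ k + 1 : ℕ) : ℤ) + ((p ^ n - 1 : ℕ) : ℤ) * B = 2 by
            rw [hbez]; ring]
        rw [hu1, one_zpow, mul_one, zpow_natCast] at h1
        rw [h1]
        norm_cast
      refine ⟨((u ^ A : (GaloisField p n)ˣ) : GaloisField p n), ?_⟩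
      rw [← Units.val_pow_eq_pow_val, key, Units.val_pow_eq_pow_val, hu, Units.val_mk0]
  · rintro y hy ⟨x0, hx0⟩
    have hx00 : x0 ≠ 0 := by
      rintro rfl
      exact hy (by rw [← hx0, zero_pow hm0])
    have hne : x0 ≠ -x0 := by
      intro h
      have h2 : (2 : GaloisField p n) * x0 = 0 := by linear_combination h
      rcases mul_eq_zero.mp h2 with h | h
      · exact h2F h
      · exact hx00 h
    have hset : {x : GaloisField p n | x ^ (p ^ k + 1) = y} = {x0, -x0} := by
      ext x
      simp only [Set.mem_setOf_eq, Set.mem_insert_iff, Set.mem_singleton_iff]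
      constructor
      · intro hx
        have hxne : x ≠ 0 := by
          rintro rfl
          exact hy (by rw [← hx, zero_pow hm0])
        have hwne : x / x0 ≠ 0 := div_ne_zero hxne hx00
        have hwm : (x / x0) ^ (p ^ k + 1) = 1 := by
          rw [div_pow, hx, hx0, div_self hy]
        have hwq : (x / x0) ^ (p ^ n - 1) = 1 := by
          rw [← hq]
          exact FiniteField.pow_card_sub_one_eq_one _ hwne
        have hw2 : (x / x0) ^ 2 = 1 := by
          have := pow_gcd_eq_one.mpr ⟨hwm, hwq⟩
          rwa [hgcd] at this
        rw [pow_two] at hw2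
        rcases mul_self_eq_one_iff.mp hw2 with h | h
        · left
          exact (div_eq_one_iff_eq hx00).mp h
        · right
          rw [div_eq_iff hx00] at h
          rw [h, neg_one_mul]
      · rintro (rfl | rfl)
        · exact hx0
        · rw [heven.neg_pow]
          exact hx0
    rw [hset, Set.ncard_pair hne]
end

section
/- Let p be an odd prime, n a positive integer, and let g ∈ F_{p^n}[x] be a Dembowski–Ostrom polynomial. Suppose every nonzero linearized derivative map M_{g,α} (α ≠ 0) is invertible and D_g ∘ M_{g,β}^{-1} = D_g ∘ M_{g,1}^{-1} for all β ∈ F_{p^n}^*. Then the set D_g ∘ M_{g,1}^{-1} = {M_{g,α} ∘ M_{g,1}^{-1} : α ∈ F_{p^n}}, with addition and composition of F_p-linear maps, is a finite field with p^n elements. -/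
/-- A Dembowski–Ostrom polynomial over `F_{p^n}`: every exponent appearing in its
support is of the form `p^i + p^j` with `0 ≤ i ≤ j ≤ n-1`. -/
def IsDO (p n : ℕ) {F : Type} [Field F] (g : Polynomial F) : Prop :=
  ∀ d ∈ g.support, ∃ i j : ℕ, i ≤ j ∧ j < n ∧ d = p ^ i + p ^ j

/-- Tri-additivity identity for Dembowski–Ostrom polynomials. -/
private lemma tri_aux {p n : ℕ} [Fact p.Prime] {F : Type} [Field F] [CharP F p]
    {g : Polynomial F} (hg : IsDO p n g) (x y z : F) :
    g.eval (x + y + z) + g.eval x + g.eval y + g.eval z =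
      g.eval (x + y) + g.eval (x + z) + g.eval (y + z) := by
  have key : ∀ t : F, g.eval t = ∑ d ∈ g.support, g.coeff d * t ^ d := by
    intro t; rw [Polynomial.eval_eq_sum, Polynomial.sum_def]
  simp only [key, ← Finset.sum_add_distrib]
  refine Finset.sum_congr rfl fun d hd => ?_
  obtain ⟨i, j, -, -, rfl⟩ := hg d hd
  simp only [pow_add, add_pow_char_pow]
  ring

private lemma eval_zero_of_DO {p n : ℕ} [Fact p.Prime] {F : Type} [Field F]
    {g : Polynomial F} (hg : IsDO p n g) : g.eval 0 = 0 := by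
  rw [← Polynomial.coeff_zero_eq_eval_zero]
  by_contra h
  obtain ⟨i, j, -, -, hd⟩ := hg 0 (Polynomial.mem_support_iff.mpr h)
  have hi : 0 < p ^ i := pow_pos (Fact.out : p.Prime).pos i
  have hj : 0 < p ^ j := pow_pos (Fact.out : p.Prime).pos j
  omega

set_option maxHeartbeats 1000000 in
set_option synthInstance.maxHeartbeats 400000 in
theorem stmt_15 (p n : ℕ) [Fact p.Prime] (hp : Odd p) (hn : 0 < n)
    (g : Polynomial (GaloisField p n)) (hg : IsDO p n g)
    (M : GaloisField p n → GaloisField p n → GaloisField p n)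
    (hM : ∀ α x, M α x = g.eval (x + α) - g.eval x - g.eval α)
    (hinv : ∀ α : GaloisField p n, α ≠ 0 → Function.Bijective (M α))
    (hquot : ∀ β : GaloisField p n, β ≠ 0 →
      (Set.range fun α : GaloisField p n => M α ∘ Function.invFun (M β)) =
      (Set.range fun α : GaloisField p n => M α ∘ Function.invFun (M 1))) :
    ∀ S : Set (GaloisField p n → GaloisField p n),
      S = (Set.range fun α : GaloisField p n => M α ∘ Function.invFun (M 1)) →
      (∀ f ∈ S, ∀ h ∈ S, f + h ∈ S) ∧
      (∀ f ∈ S, ∀ h ∈ S, f ∘ h ∈ S) ∧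
      ((0 : GaloisField p n → GaloisField p n) ∈ S) ∧
      (id ∈ S) ∧
      (∀ f ∈ S, ∀ h ∈ S, f ∘ h = h ∘ f) ∧
      (∀ f ∈ S, ∀ h ∈ S, ∀ h' ∈ S, f ∘ (h + h') = f ∘ h + f ∘ h') ∧
      (∀ f ∈ S, f ≠ 0 → ∃ h ∈ S, f ∘ h = id ∧ h ∘ f = id) ∧
      S.ncard = p ^ n := by
  classical
  intro S hS
  have tri := fun x y z => tri_aux hg x y z
  have g0 : g.eval 0 = 0 := eval_zero_of_DO hg
  -- bi-additivity of M
  have hB : ∀ α x y, M α (x + y) = M α x + M α y := by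
    intro α x y
    simp only [hM]
    linear_combination tri x y α
  have hA : ∀ α β x, M (α + β) x = M α x + M β x := by
    intro α β x
    simp only [hM]
    rw [show x + (α + β) = α + β + x from by ring, show x + α = α + x from add_comm x α,
      show x + β = β + x from add_comm x β]
    linear_combination tri α β x
  have hM0 : ∀ x, M 0 x = 0 := by intro x; simp [hM, g0]
  have hMz : ∀ α, M α 0 = 0 := by intro α; simp [hM, g0]
  have h1ne : (1 : GaloisField p n) ≠ 0 := one_ne_zero
  have hb1 : Function.Bijective (M 1) := hinv 1 h1ne
  set iv := Function.invFun (M 1) with hiv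
  set Fn := fun α : GaloisField p n => M α ∘ iv with hFn
  subst hS
  have ri : ∀ x, M 1 (iv x) = x := fun x => Function.rightInverse_invFun hb1.2 x
  have li : ∀ x, iv (M 1 x) = x := fun x => Function.leftInverse_invFun hb1.1 x
  have ivadd : ∀ x y, iv (x + y) = iv x + iv y := by
    intro x y
    apply hb1.1
    rw [hB, ri, ri, ri]
  have iv0 : iv 0 = 0 := by
    apply hb1.1; rw [ri, hMz]
  have hFnadd : ∀ α β, Fn (α + β) = Fn α + Fn β := by
    intro α β; funext x
    exact hA α β (iv x)
  have hFn0 : Fn 0 = 0 := by funext x; exact hM0 (iv x)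
  have hFn1 : Fn 1 = id := by funext x; exact ri x
  have hFninj : Function.Injective Fn := by
    intro α β h
    by_contra hne
    have hd : α - β ≠ 0 := sub_ne_zero.mpr hne
    have h2 : ∀ x, M α x = M β x := by
      intro x
      have := congrFun h (M 1 x)
      simpa [hFn, li x] using this
    have hz : ∀ x, M (α - β) x = 0 := by
      intro x
      have h3 := hA (α - β) β x
      rw [show α - β + β = α from by ring] at h3
      linear_combination h2 x - h3
    obtain ⟨x, hx⟩ := (hinv (α - β) hd).2 1
    rw [hz x] at hx
    exact h1ne hx.symm
  have bijFn : ∀ α, α ≠ 0 → Function.Bijective (Fn α) := by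
    intro α hα
    have hb : Function.Bijective iv :=
      Function.bijective_iff_has_inverse.mpr ⟨M 1, ri, li⟩
    exact (hinv α hα).comp hb
  have hFncomp : ∀ α β, ∃ γ, Fn α ∘ Fn β = Fn γ := by
    intro α β
    by_cases hβ : β = 0
    · refine ⟨0, ?_⟩
      subst hβ
      funext x
      show M α (iv (M 0 (iv x))) = M 0 (iv x)
      rw [hM0, iv0, hMz]
    · have hmem : Fn α ∈ Set.range (fun δ : GaloisField p n => M δ ∘ Function.invFun (M β)) := by
        rw [hquot β hβ]; exact ⟨α, rfl⟩
      obtain ⟨γ, hγ⟩ := hmem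
      refine ⟨γ, ?_⟩
      funext x
      have lβ : ∀ y, Function.invFun (M β) (M β y) = y :=
        fun y => Function.leftInverse_invFun (hinv β hβ).1 y
      have hγ' : Fn α = M γ ∘ Function.invFun (M β) := hγ.symm
      calc (Fn α ∘ Fn β) x = (Fn α) (M β (iv x)) := rfl
        _ = (M γ ∘ Function.invFun (M β)) (M β (iv x)) := by rw [hγ']
        _ = M γ (iv x) := by simp only [Function.comp_apply, lβ]
        _ = Fn γ x := rfl
  -- the additive-endomorphism picture
  let Em : GaloisField p n → AddMonoid.End (GaloisField p n) := fun α =>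
    AddMonoidHom.mk' (fun x => M α (iv x)) (fun x y => by show M α (iv (x + y)) = M α (iv x) + M α (iv y); rw [ivadd, hB])
  have Emcoe : ∀ α x, Em α x = Fn α x := fun α x => rfl
  let R : Subring (AddMonoid.End (GaloisField p n)) :=
  { carrier := Set.range Em
    zero_mem' := ⟨0, DFunLike.ext _ _ fun x => hM0 (iv x)⟩
    one_mem' := ⟨1, DFunLike.ext _ _ fun x => ri x⟩
    add_mem' := by
      rintro _ _ ⟨α, rfl⟩ ⟨β, rfl⟩
      exact ⟨α + β, DFunLike.ext _ _ fun x => hA α β (iv x)⟩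
    mul_mem' := by
      rintro _ _ ⟨α, rfl⟩ ⟨β, rfl⟩
      obtain ⟨γ, hγ⟩ := hFncomp α β
      exact ⟨γ, DFunLike.ext _ _ fun x => (congrFun hγ x).symm⟩
    neg_mem' := by
      rintro _ ⟨α, rfl⟩
      refine ⟨-α, ?_⟩
      refine DFunLike.ext _ _ fun x => ?_
      have h := hA α (-α) (iv x)
      rw [show α + -α = (0 : GaloisField p n) from by ring, hM0] at h
      show M (-α) (iv x) = -(M α (iv x))
      linear_combination -h }
  have memR : ∀ φ : AddMonoid.End (GaloisField p n), φ ∈ R ↔ φ ∈ Set.range Em :=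
    fun φ => Iff.rfl
  haveI : Finite (AddMonoid.End (GaloisField p n)) :=
    Finite.of_injective (fun φ => (φ : GaloisField p n → GaloisField p n))
      DFunLike.coe_injective
  have endne : (1 : AddMonoid.End (GaloisField p n)) ≠ 0 := by
    intro hcon
    have : (1 : GaloisField p n) = 0 := by
      simpa using congrFun (congrArg DFunLike.coe hcon) 1
    exact h1ne this
  haveI : Nontrivial R :=
    ⟨⟨1, R.one_mem⟩, ⟨0, R.zero_mem⟩, fun hcon => endne (congrArg Subtype.val hcon)⟩
  haveI : NoZeroDivisors R := by
    refine ⟨fun {a b} hab => ?_⟩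
    obtain ⟨av, hav⟩ := a
    obtain ⟨bv, hbv⟩ := b
    obtain ⟨α, rfl⟩ := (memR av).mp hav
    obtain ⟨β, rfl⟩ := (memR bv).mp hbv
    by_cases hα : α = 0
    · left; apply Subtype.ext; subst hα
      exact DFunLike.ext _ _ fun x => hM0 (iv x)
    · by_cases hβ : β = 0
      · right; apply Subtype.ext; subst hβ
        exact DFunLike.ext _ _ fun x => hM0 (iv x)
      · exfalso
        have hbij : Function.Bijective (Fn α ∘ Fn β) := (bijFn α hα).comp (bijFn β hβ)
        obtain ⟨x, hx⟩ := hbij.2 1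
        have hz : Em α * Em β = 0 := congrArg Subtype.val hab
        have : (1 : GaloisField p n) = 0 := by
          rw [← hx]
          exact congrFun (congrArg DFunLike.coe hz) x
        exact h1ne this
  haveI : IsDomain R := NoZeroDivisors.to_isDomain _
  have hfield := Finite.isDomain_to_isField ↥R
  have hcomm : ∀ α β, Fn α ∘ Fn β = Fn β ∘ Fn α := by
    intro α β
    have h := hfield.mul_comm ⟨Em α, (memR _).mpr ⟨α, rfl⟩⟩ ⟨Em β, (memR _).mpr ⟨β, rfl⟩⟩
    have h2 : Em α * Em β = Em β * Em α := congrArg Subtype.val h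
    funext x
    exact congrFun (congrArg DFunLike.coe h2) x
  refine ⟨?_, ?_, ?_, ?_, ?_, ?_, ?_, ?_⟩
  · rintro f ⟨α, rfl⟩ h ⟨β, rfl⟩
    exact ⟨α + β, hFnadd α β⟩
  · rintro f ⟨α, rfl⟩ h ⟨β, rfl⟩
    obtain ⟨γ, hγ⟩ := hFncomp α β
    exact ⟨γ, hγ.symm⟩
  · exact ⟨0, hFn0⟩
  · exact ⟨1, hFn1⟩
  · rintro f ⟨α, rfl⟩ h ⟨β, rfl⟩
    exact hcomm α β
  · rintro f ⟨α, rfl⟩ h ⟨β, rfl⟩ h' ⟨γ, rfl⟩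
    funext x
    show M α (iv ((Fn β + Fn γ) x)) = M α (iv (Fn β x)) + M α (iv (Fn γ x))
    have hpt : (Fn β + Fn γ) x = Fn β x + Fn γ x := rfl
    rw [hpt, ivadd, hB]
  · rintro f ⟨α, rfl⟩ hfne
    have hα : α ≠ 0 := by rintro rfl; exact hfne hFn0
    have hmem : (M 1 ∘ Function.invFun (M α)) ∈ Set.range Fn := by
      rw [← hquot α hα]; exact ⟨1, rfl⟩
    refine ⟨M 1 ∘ Function.invFun (M α), hmem, ?_, ?_⟩
    · funext x
      show M α (iv (M 1 (Function.invFun (M α) x))) = x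
      rw [li]
      exact Function.rightInverse_invFun (hinv α hα).2 x
    · funext x
      show M 1 (Function.invFun (M α) (M α (iv x))) = x
      rw [Function.leftInverse_invFun (hinv α hα).1 (iv x)]
      exact ri x
  · rw [← Nat.card_coe_set_eq, Nat.card_range_of_injective hFninj,
      GaloisField.card p n hn.ne']
end

section
/- Let p be an odd prime, n a positive integer, and g ∈ F_{p^n}[x] a Dembowski–Ostrom polynomial such that for every α ∈ F_{p^n}^* the linearized derivative Δ_{g,α}(x) = g(x+α) − g(x) − g(α) equals γ·x for some γ ∈ F_{p^n}^* (depending on α). Then g(x) = c·x^2 for some c ∈ F_{p^n}^* (as functions on F_{p^n}, i.e., modulo x^{p^n} − x). -/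
theorem stmt_16 (p n : ℕ) [Fact p.Prime] (hp : Odd p) (hn : 0 < n)
    (g : Polynomial (GaloisField p n)) (hg : IsDO p n g)
    (h : ∀ α : GaloisField p n, α ≠ 0 → ∃ γ : GaloisField p n, γ ≠ 0 ∧
      ∀ x, g.eval (x + α) - g.eval x - g.eval α = γ * x) :
    ∃ c : GaloisField p n, c ≠ 0 ∧ ∀ x, g.eval x = c * x ^ 2 := by
  have hpp : p.Prime := Fact.out
  have h2 : (2 : GaloisField p n) ≠ 0 := by
    intro h2
    have hd : p ∣ 2 := by
      have := (CharP.cast_eq_zero_iff (GaloisField p n) p 2).mp (by exact_mod_cast h2)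
      exact this
    have : p = 2 := (Nat.prime_dvd_prime_iff_eq hpp Nat.prime_two).mp hd
    subst this
    exact (by norm_num : ¬ Odd 2) hp
  have hg0 : g.eval 0 = 0 := by
    rw [← Polynomial.coeff_zero_eq_eval_zero]
    by_contra h0
    obtain ⟨i, j, _, _, hij⟩ := hg 0 (Polynomial.mem_support_iff.mpr h0)
    have h1 : 0 < p ^ i := pow_pos hpp.pos i
    have h2 : 0 < p ^ j := pow_pos hpp.pos j
    omega
  have geven : ∀ x : GaloisField p n, g.eval (-x) = g.eval x := by
    intro x
    rw [Polynomial.eval_eq_sum, Polynomial.eval_eq_sum, Polynomial.sum, Polynomial.sum]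
    refine Finset.sum_congr rfl fun d hd => ?_
    obtain ⟨i, j, hij, hjn, rfl⟩ := hg d hd
    rw [Even.neg_pow (hp.pow.add_odd hp.pow)]
  obtain ⟨γ, hγ, hγx⟩ := h 1 one_ne_zero
  have hB : ∀ x y : GaloisField p n,
      g.eval (x + y) - g.eval x - g.eval y = γ * (x * y) := by
    intro x y
    rcases eq_or_ne y 0 with rfl | hy
    · simp [hg0]
    obtain ⟨δ, hδ, hδx⟩ := h y hy
    have h1 : δ = γ * y := by
      have e1 := hδx 1
      have e2 := hγx y
      rw [add_comm y 1] at e2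
      linear_combination e2 - e1
    have := hδx x
    rw [h1] at this
    linear_combination this
  refine ⟨γ / 2, div_ne_zero hγ h2, fun x => ?_⟩
  have key := hB x (-x)
  rw [add_neg_cancel, hg0, geven] at key
  field_simp
  linear_combination -key
end

section
/- Let p be an odd prime, n, k positive integers with n/gcd(k,n) odd, and let g(x) = x^{p^k+1} ∈ F_{p^n}[x]. For α ∈ F_{p^n}^*, let M_α denote the invertible F_p-linear map x ↦ α x^{p^k} + α^{p^k} x on F_{p^n}. Then for any α, β ∈ F_{p^n}^*, the map X := M_β ∘ M_α^{-1} is, as an F_p-linear endomorphism of F_{p^n}, conjugate to multiplication by α^{-1}β or by (α^{-1}β)^{p^k}; in particular, the F_p-subalgebra F_p[X] of End_{F_p}(F_{p^n}) generated by X is a field isomorphic to F_p(α^{-1}β). -/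
private lemma conj_identity {K : Type*} [Field K] (q : ℕ) (α β y : K)
    (hfa : ∀ u v : K, (u + v) ^ q = u ^ q + v ^ q)
    (hfs : ∀ u v : K, (u - v) ^ q = u ^ q - v ^ q) :
    α ^ q * ((α ^ q * β - α * β ^ q) * (β * y ^ q + β ^ q * y) ^ q
        + (α ^ q * β - α * β ^ q) ^ q * (β * y ^ q + β ^ q * y))
    = β ^ q * ((α ^ q * β - α * β ^ q) * (α * y ^ q + α ^ q * y) ^ q
        + (α ^ q * β - α * β ^ q) ^ q * (α * y ^ q + α ^ q * y)) := by
  have h1 : (β * y ^ q + β ^ q * y) ^ q = β ^ q * (y ^ q) ^ q + (β ^ q) ^ q * y ^ q := by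
    rw [hfa, mul_pow, mul_pow]
  have h2 : (α * y ^ q + α ^ q * y) ^ q = α ^ q * (y ^ q) ^ q + (α ^ q) ^ q * y ^ q := by
    rw [hfa, mul_pow, mul_pow]
  have h3 : (α ^ q * β - α * β ^ q) ^ q = (α ^ q) ^ q * β ^ q - α ^ q * (β ^ q) ^ q := by
    rw [hfs, mul_pow, mul_pow]
  rw [h1, h2, h3]; ring

theorem stmt_18 (p n k : ℕ) [Fact p.Prime] (hp : Odd p) (hn : 0 < n) (hk : 0 < k)
    (hodd : Odd (n / Nat.gcd k n)) (α β : GaloisField p n) (hα : α ≠ 0) (hβ : β ≠ 0)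
    (ψα : GaloisField p n → GaloisField p n)
    (hψα1 : ∀ x, α * (ψα x) ^ p ^ k + α ^ p ^ k * ψα x = x)
    (hψα2 : ∀ x, ψα (α * x ^ p ^ k + α ^ p ^ k * x) = x)
    (X : Module.End (ZMod p) (GaloisField p n))
    (hX : ∀ x, X x = β * (ψα x) ^ p ^ k + β ^ p ^ k * ψα x) :
    (∃ ψ : GaloisField p n →ₗ[ZMod p] GaloisField p n, Function.Bijective ψ ∧
      ((∀ x, ψ (X x) = (α⁻¹ * β) * ψ x) ∨
        (∀ x, ψ (X x) = (α⁻¹ * β) ^ p ^ k * ψ x))) ∧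
    Nonempty ((Algebra.adjoin (ZMod p) {X}) ≃ₐ[ZMod p]
      (IntermediateField.adjoin (ZMod p) {α⁻¹ * β})) := by
  classical
  have hpprime : p.Prime := Fact.out
  -- numerics
  have hg : 0 < Nat.gcd k n := Nat.gcd_pos_of_pos_right k hn
  set g := Nat.gcd k n with hgdef
  set b := n / g with hbdef
  set a := k / g with hadef
  have hnb : n = g * b := (Nat.mul_div_cancel' (Nat.gcd_dvd_right k n)).symm
  have hka : k = g * a := (Nat.mul_div_cancel' (Nat.gcd_dvd_left k n)).symm
  have hoddb : Odd b := hodd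
  have hkb : k * b = n * a := by rw [hka, hnb]; ring
  -- field basics
  haveI : Fintype (GaloisField p n) := Fintype.ofFinite _
  have hcard : Fintype.card (GaloisField p n) = p ^ n := by
    rw [← Nat.card_eq_fintype_card]; exact GaloisField.card p n hn.ne'
  have hpow_kb : ∀ x : GaloisField p n, x ^ (p ^ k) ^ b = x := by
    intro x
    have he : (p ^ k) ^ b = (p ^ n) ^ a := by rw [← pow_mul, ← pow_mul, hkb]
    rw [he, ← hcard]
    exact FiniteField.pow_card_pow a x
  have hfa : ∀ u v : GaloisField p n, (u + v) ^ p ^ k = u ^ p ^ k + v ^ p ^ k := fun u v =>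
    add_pow_char_pow u v p k
  have hfs : ∀ u v : GaloisField p n, (u - v) ^ p ^ k = u ^ p ^ k - v ^ p ^ k := fun u v =>
    sub_pow_char_pow (x := u) (y := v) k
  have h2ne : (2 : GaloisField p n) ≠ 0 := by
    intro h
    have h2 : (p : ℕ) ∣ 2 :=
      (CharP.cast_eq_zero_iff (GaloisField p n) p 2).mp (by exact_mod_cast h)
    rcases hp with ⟨t, ht⟩
    have := Nat.le_of_dvd (by norm_num) h2
    have := hpprime.two_le
    omega
  have hzr : ∀ (j : ℕ) (r : ZMod p), r ^ p ^ j = r := by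
    intro j r
    induction j with
    | zero => simp
    | succ i ih => rw [pow_succ, pow_mul, ih, ZMod.pow_card]
  have hzsmul : ∀ (r : ZMod p), (algebraMap (ZMod p) (GaloisField p n) r) ^ p ^ k
      = algebraMap (ZMod p) (GaloisField p n) r := by
    intro r
    rw [← map_pow, hzr k r]
  set c := α⁻¹ * β with hc
  -- the main construction
  have main : ∃ (ψ : GaloisField p n →ₗ[ZMod p] GaloisField p n)
      (c' : GaloisField p n), Function.Bijective ψ ∧ (c' = c ∨ c' = c ^ p ^ k) ∧
      (∀ x, ψ (X x) = c' * ψ x) := by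
    set W := α ^ p ^ k * β - α * β ^ p ^ k with hW
    by_cases hw : W = 0
    · -- here c ^ p ^ k = c and X = c • id
      refine ⟨LinearMap.id, c, Function.bijective_id, Or.inl rfl, ?_⟩
      intro x
      have hαβ : α ^ p ^ k * β = α * β ^ p ^ k := sub_eq_zero.mp hw
      have hβq : β ^ p ^ k = α ^ p ^ k * c := by
        rw [hc]
        field_simp
        linear_combination - hαβ
      have hβc : β = α * c := by rw [hc]; field_simp
      have hXc : X x = c * x := by
        rw [hX x]
        conv_rhs => rw [← hψα1 x]
        set y := ψα x
        rw [hβq]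
        conv_lhs => rw [hβc]
        ring
      simp only [LinearMap.id_coe, id_eq]
      exact hXc
    · -- W ≠ 0 : conjugate via z ↦ W z^q + W^q z
      have hWq : W ^ p ^ k ≠ 0 := pow_ne_zero _ hw
      refine ⟨{ toFun := fun z => W * z ^ p ^ k + W ^ p ^ k * z
                map_add' := ?_
                map_smul' := ?_ }, c ^ p ^ k, ?_, Or.inr rfl, ?_⟩
      · intro u v
        rw [hfa]; ring
      · intro r z
        simp only [RingHom.id_apply]
        rw [Algebra.smul_def, Algebra.smul_def, mul_pow, hzsmul]
        ring
      · -- bijective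
        rw [← Finite.injective_iff_bijective]
        have hker : ∀ z : GaloisField p n, W * z ^ p ^ k + W ^ p ^ k * z = 0 → z = 0 := by
          intro z hz
          by_contra hzne
          have hr : (z / W) ^ p ^ k = -(z / W) := by
            rw [div_pow, ← neg_div, div_eq_div_iff hWq hw]
            linear_combination hz
          have hiter : ∀ j : ℕ, (z / W) ^ (p ^ k) ^ j = (-1) ^ j * (z / W) := by
            intro j
            induction j with
            | zero => simp
            | succ j ih =>
              rw [pow_succ, pow_mul, ih, mul_pow, hr]
              have ho : ((-1 : GaloisField p n) ^ j) ^ p ^ k = (-1) ^ j := by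
                rw [← pow_mul, mul_comm j (p ^ k), pow_mul, (hp.pow).neg_one_pow]
              rw [ho]
              ring
          have hb1 := hiter b
          rw [hpow_kb, hoddb.neg_one_pow] at hb1
          have hzw : z / W = 0 := by
            have h20 : 2 * (z / W) = 0 := by linear_combination hb1
            rcases mul_eq_zero.mp h20 with h | h
            · exact absurd h h2ne
            · exact h
          exact hzne ((div_eq_zero_iff.mp hzw).resolve_right hw)
        intro u v huv
        simp only [LinearMap.coe_mk, AddHom.coe_mk] at huv
        have h0 : W * (u - v) ^ p ^ k + W ^ p ^ k * (u - v) = 0 := by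
          rw [hfs]; linear_combination huv
        have := hker _ h0
        have := sub_eq_zero.mp this
        exact this
      · -- the conjugation identity
        intro x
        simp only [LinearMap.coe_mk, AddHom.coe_mk]
        rw [hX x]
        conv_rhs => rw [← hψα1 x]
        set y := ψα x
        have hid := conj_identity (p ^ k) α β y hfa hfs
        rw [← hW] at hid
        have hαq : α ^ p ^ k ≠ 0 := pow_ne_zero _ hα
        have hc2 : α ^ p ^ k * c ^ p ^ k = β ^ p ^ k := by
          rw [hc, mul_pow, ← mul_assoc, ← mul_pow, mul_inv_cancel₀ hα, one_pow, one_mul]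
        apply mul_left_cancel₀ hαq
        rw [← mul_assoc, hc2]
        exact hid
  obtain ⟨ψ, c', hbij, hc'or, hconj⟩ := main
  refine ⟨⟨ψ, hbij, ?_⟩, ?_⟩
  · rcases hc'or with h | h
    · left; intro x; rw [← h]; exact hconj x
    · right; intro x; rw [← h]; exact hconj x
  · -- the algebra isomorphism
    have hadjcc : Algebra.adjoin (ZMod p) ({c'} : Set (GaloisField p n))
        = Algebra.adjoin (ZMod p) {c} := by
      rcases hc'or with h | h
      · rw [h]
      · rw [h]
        apply le_antisymm
        · rw [Algebra.adjoin_le_iff]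
          intro t ht
          rw [Set.mem_singleton_iff] at ht
          subst ht
          exact Subalgebra.pow_mem _ (Algebra.subset_adjoin (Set.mem_singleton c)) _
        · rw [Algebra.adjoin_le_iff]
          intro t ht
          rw [Set.mem_singleton_iff] at ht
          subst ht
          have hcb : (c ^ p ^ k) ^ (p ^ k) ^ (b - 1) = c := by
            rw [← pow_mul, mul_comm, ← pow_succ, show b - 1 + 1 = b from by
              have := hoddb.pos; omega]
            exact hpow_kb c
          have hmem := Subalgebra.pow_mem (Algebra.adjoin (ZMod p) {c ^ p ^ k})
            (Algebra.subset_adjoin (Set.mem_singleton (c ^ p ^ k))) ((p ^ k) ^ (b - 1))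
          rw [hcb] at hmem
          exact hmem
    set ψe : GaloisField p n ≃ₗ[ZMod p] GaloisField p n := LinearEquiv.ofBijective ψ hbij
      with hψe
    set Γ : Module.End (ZMod p) (GaloisField p n) ≃ₐ[ZMod p]
        Module.End (ZMod p) (GaloisField p n) :=
      AlgEquiv.ofLinearEquiv ψe.conj
        (by ext z; simp [LinearEquiv.conj_apply_apply])
        (fun f g => by
          ext z
          simp [LinearEquiv.conj_apply_apply, Module.End.mul_apply]) with hΓ
    have hΓX : Γ X = Algebra.lmul (ZMod p) (GaloisField p n) c' := by
      apply LinearMap.ext; intro z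
      have h1 : Γ X z = ψe (X (ψe.symm z)) := by
        rw [hΓ]
        simp [LinearEquiv.conj_apply_apply]
      rw [h1]
      have h2 : ψe (X (ψe.symm z)) = c' * ψ (ψe.symm z) := hconj _
      rw [h2]
      have h3 : ψ (ψe.symm z) = z := ψe.apply_symm_apply z
      rw [h3]
      rfl
    have hmap1 : (Algebra.adjoin (ZMod p) {X}).map Γ.toAlgHom
        = Algebra.adjoin (ZMod p) {Algebra.lmul (ZMod p) (GaloisField p n) c'} := by
      rw [AlgHom.map_adjoin, Set.image_singleton]
      congr 1
      simpa using hΓX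
    have hmap2 : (Algebra.adjoin (ZMod p) {c'}).map (Algebra.lmul (ZMod p) (GaloisField p n))
        = Algebra.adjoin (ZMod p) {Algebra.lmul (ZMod p) (GaloisField p n) c'} := by
      rw [AlgHom.map_adjoin, Set.image_singleton]
    have e1 := Subalgebra.equivMapOfInjective (Algebra.adjoin (ZMod p) {X}) Γ.toAlgHom
      (by simpa using Γ.injective)
    have e2 := Subalgebra.equivMapOfInjective (Algebra.adjoin (ZMod p) {c'})
      (Algebra.lmul (ZMod p) (GaloisField p n)) Algebra.lmul_injective
    have hiso : (Algebra.adjoin (ZMod p) ({X} : Set (Module.End (ZMod p) (GaloisField p n))))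
        ≃ₐ[ZMod p] Algebra.adjoin (ZMod p) ({c'} : Set (GaloisField p n)) :=
      e1.trans ((Subalgebra.equivOfEq _ _ (hmap1.trans hmap2.symm)).trans e2.symm)
    have halg : ∀ x ∈ ({c} : Set (GaloisField p n)), IsAlgebraic (ZMod p) x := fun x _ =>
      (IsIntegral.of_finite (ZMod p) x).isAlgebraic
    have hIF : (IntermediateField.adjoin (ZMod p) ({c} : Set (GaloisField p n))).toSubalgebra
        = Algebra.adjoin (ZMod p) {c} := IntermediateField.adjoin_toSubalgebra_of_isAlgebraic halg
    exact ⟨hiso.trans (Subalgebra.equivOfEq _ _ (hadjcc.trans hIF.symm))⟩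
end

section
/- Let p be an odd prime, n, k positive integers with n/gcd(k,n) odd, α, β, ᾱ, β̄ ∈ F_{p^n} with α, ᾱ ≠ 0, and let φ_γ(x) = γ x^{p^k} + γ^{p^k} x. Then φ_β ∘ φ_α^{-1} = φ_{β̄} ∘ φ_{ᾱ}^{-1} if and only if either (1) α^{-1}β ∈ F_{p^{gcd(k,n)}} and α^{-1}β = ᾱ^{-1}β̄, or (2) α^{-1}β ∉ F_{p^{gcd(k,n)}}, α^{-1}β = ᾱ^{-1}β̄, and ᾱ = cα for some c ∈ F_{p^{gcd(k,n)}}^*. -/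
section Aux

variable {K : Type*} [Field K]

lemma aux_pow_inj (p : ℕ) [Fact p.Prime] [CharP K p] (m : ℕ) :
    Function.Injective fun x : K => x ^ p ^ m := by
  intro x y h
  simp only at h
  have h2 : (x - y) ^ p ^ m = 0 := by
    rw [sub_pow_char_pow, h, sub_self]
  have := pow_eq_zero_iff (pow_ne_zero m (Fact.out (p := p.Prime)).pos.ne') |>.mp h2
  exact sub_eq_zero.mp this

lemma aux_pow_mul (p : ℕ) (a : ℕ) (t : K) (ht : t ^ p ^ a = t) :
    ∀ j, t ^ p ^ (a * j) = t := by
  intro j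
  induction j with
  | zero => simp
  | succ j ih =>
    have : p ^ (a * (j + 1)) = p ^ (a * j) * p ^ a := by
      rw [← pow_add]; ring_nf
    rw [this, pow_mul, ih, ht]

lemma aux_pow_gcd (p : ℕ) [Fact p.Prime] [CharP K p] :
    ∀ a b : ℕ, ∀ t : K, t ^ p ^ a = t → t ^ p ^ b = t → t ^ p ^ (Nat.gcd a b) = t := by
  intro a
  induction a using Nat.strong_induction_on with
  | _ a ih =>
    intro b t ha hb
    rcases Nat.eq_zero_or_pos a with h0 | hpos
    · subst h0; simpa using hb
    · rw [Nat.gcd_rec]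
      refine ih (b % a) (Nat.mod_lt b hpos) a t ?_ ha
      have hdm : a * (b / a) + b % a = b := Nat.div_add_mod b a
      have h1 : (t ^ p ^ (b % a)) ^ p ^ (a * (b / a)) = t ^ p ^ (a * (b / a)) := by
        rw [← pow_mul, ← pow_add]
        rw [aux_pow_mul p a t ha (b / a)]
        rw [Nat.add_comm, hdm, hb]
      exact aux_pow_inj p (a * (b / a)) h1

set_option linter.unreachableTactic false in
set_option linter.unusedTactic false in
lemma aux_li2 (f g : K →* K) (hfg : f ≠ g) (a b : K)
    (hsum : ∀ x, a * f x + b * g x = 0) : a = 0 ∧ b = 0 := by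
  have vinj : Function.Injective ![f, g] := by
    intro i j hij
    fin_cases i <;> fin_cases j <;> simp_all <;>
      first | rfl | exact absurd hij hfg | exact absurd hij.symm hfg
  have li := (linearIndependent_monoidHom K K).comp ![f, g] vinj
  have key := Fintype.linearIndependent_iff.mp li ![a, b] ?_
  · exact ⟨key 0, key 1⟩
  · funext x
    have := hsum x
    simp [Fin.sum_univ_two]
    simpa using this

set_option linter.unreachableTactic false in
set_option linter.unusedTactic false in
lemma aux_li3 (f g h : K →* K) (hfg : f ≠ g) (hfh : f ≠ h) (hgh : g ≠ h)
    (a b c : K) (hsum : ∀ x, a * f x + b * g x + c * h x = 0) :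
    a = 0 ∧ b = 0 ∧ c = 0 := by
  have vinj : Function.Injective ![f, g, h] := by
    intro i j hij
    fin_cases i <;> fin_cases j <;> simp_all <;>
      first
      | rfl
      | exact absurd hij hfg | exact absurd hij.symm hfg
      | exact absurd hij hfh | exact absurd hij.symm hfh
      | exact absurd hij hgh | exact absurd hij.symm hgh
  have li := (linearIndependent_monoidHom K K).comp ![f, g, h] vinj
  have key := Fintype.linearIndependent_iff.mp li ![a, b, c] ?_
  · exact ⟨key 0, key 1, key 2⟩
  · funext x
    have := hsum x
    simp [Fin.sum_univ_three]
    simpa using this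

end Aux

theorem stmt_19 (p n k : ℕ) [Fact p.Prime] (hp : Odd p) (hn : 0 < n) (hk : 0 < k)
    (hodd : Odd (n / Nat.gcd k n))
    (α β α' β' : GaloisField p n) (hα : α ≠ 0) (hα' : α' ≠ 0)
    (ψα ψα' : GaloisField p n → GaloisField p n)
    (hψα1 : ∀ x, α * (ψα x) ^ p ^ k + α ^ p ^ k * ψα x = x)
    (hψα2 : ∀ x, ψα (α * x ^ p ^ k + α ^ p ^ k * x) = x)
    (hψα'1 : ∀ x, α' * (ψα' x) ^ p ^ k + α' ^ p ^ k * ψα' x = x)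
    (hψα'2 : ∀ x, ψα' (α' * x ^ p ^ k + α' ^ p ^ k * x) = x) :
    (∀ x : GaloisField p n,
        β * (ψα x) ^ p ^ k + β ^ p ^ k * ψα x =
          β' * (ψα' x) ^ p ^ k + β' ^ p ^ k * ψα' x) ↔
      (((α⁻¹ * β) ^ p ^ k = α⁻¹ * β ∧ α⁻¹ * β = α'⁻¹ * β') ∨
        (¬ (α⁻¹ * β) ^ p ^ k = α⁻¹ * β ∧ α⁻¹ * β = α'⁻¹ * β' ∧
          ∃ c : GaloisField p n, c ≠ 0 ∧ c ^ p ^ k = c ∧ α' = c * α)) := by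
  haveI : Fintype (GaloisField p n) := Fintype.ofFinite _
  have hcard : Fintype.card (GaloisField p n) = p ^ n := by
    rw [← Nat.card_eq_fintype_card]; exact GaloisField.card p n hn.ne'
  have hpn : ∀ t : GaloisField p n, t ^ p ^ n = t := by
    intro t
    have := FiniteField.pow_card t
    rwa [hcard] at this
  -- gcd (2*k) n = gcd k n
  have hgcd2 : Nat.gcd (2 * k) n = Nat.gcd k n := by
    set g := Nat.gcd k n with hgdef
    have hg0 : 0 < g := Nat.gcd_pos_of_pos_left n hk
    have hgh : g ∣ Nat.gcd (2 * k) n :=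
      Nat.dvd_gcd ((Nat.gcd_dvd_left k n).mul_left 2) (Nat.gcd_dvd_right k n)
    have hh2g : Nat.gcd (2 * k) n ∣ 2 * g := by
      have : Nat.gcd (2 * k) n ∣ Nat.gcd (2 * k) (2 * n) :=
        Nat.dvd_gcd (Nat.gcd_dvd_left _ _) ((Nat.gcd_dvd_right _ _).mul_left 2)
      rwa [Nat.gcd_mul_left] at this
    obtain ⟨m, hm⟩ := hgh
    have hm2 : m ∣ 2 := by
      have := hh2g
      rw [hm] at this
      rw [mul_comm 2 g] at this
      exact (Nat.mul_dvd_mul_iff_left hg0).mp this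
    rcases (Nat.dvd_prime Nat.prime_two).mp hm2 with h1 | h2
    · rw [hm, h1, mul_one]
    · exfalso
      rw [h2] at hm
      have hdvd : g * 2 ∣ n := by rw [← hm]; exact Nat.gcd_dvd_right _ _
      obtain ⟨t, ht⟩ := hdvd
      have hdiv : n / g = 2 * t := by
        rw [ht, mul_assoc, Nat.mul_div_cancel_left _ hg0]
      rcases hodd with ⟨w, hw⟩
      omega
  have fix2to1 : ∀ t : GaloisField p n, t ^ p ^ (2 * k) = t → t ^ p ^ k = t := by
    intro t h2
    have hg := aux_pow_gcd p (2 * k) n t h2 (hpn t)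
    rw [hgcd2] at hg
    obtain ⟨m, hm⟩ := Nat.gcd_dvd_left k n
    rw [hm]
    exact aux_pow_mul p _ t hg m
  have hp2 : (p : ℕ) ≠ 2 := by
    rintro rfl
    simp [Nat.odd_iff] at hp
  have h2K : (2 : GaloisField p n) ≠ 0 := by
    intro h
    have h' : ((2 : ℕ) : GaloisField p n) = 0 := by exact_mod_cast h
    have := (CharP.cast_eq_zero_iff (GaloisField p n) p 2).mp h'
    exact hp2 ((Nat.prime_dvd_prime_iff_eq Fact.out Nat.prime_two).mp this)
  constructor
  · -- forward
    intro H
    by_cases hline : ∀ x : GaloisField p n, x ^ p ^ k = x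
    · -- Frobenius power is identity
      left
      have e1 := hψα1 1
      have e1' := hψα'1 1
      have eH := H 1
      simp only [hline] at e1 e1' eH
      refine ⟨hline _, ?_⟩
      rw [inv_mul_eq_div, inv_mul_eq_div, div_eq_div_iff hα hα']
      linear_combination (α * α') * eH - (α' * β) * e1 + (α * β') * e1'
    · push_neg at hline
      obtain ⟨x₀, hx₀⟩ := hline
      -- distinct monoid homs
      have hne01 : (powMonoidHom 1 : GaloisField p n →* GaloisField p n) ≠ powMonoidHom (p ^ k) := by
        intro h
        have := DFunLike.congr_fun h x₀
        simp only [powMonoidHom_apply, pow_one] at this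
        exact hx₀ this.symm
      have hne02 : (powMonoidHom 1 : GaloisField p n →* GaloisField p n) ≠ powMonoidHom (p ^ (2 * k)) := by
        intro h
        apply hx₀
        refine fix2to1 x₀ ?_
        have := DFunLike.congr_fun h x₀
        simp only [powMonoidHom_apply, pow_one] at this
        exact this.symm
      have hne12 : (powMonoidHom (p ^ k) : GaloisField p n →* GaloisField p n) ≠ powMonoidHom (p ^ (2 * k)) := by
        intro h
        apply hx₀
        obtain ⟨y, hy⟩ := Finite.injective_iff_surjective.mp (aux_pow_inj (K := GaloisField p n) p k) x₀
        simp only at hy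
        have hy2 := DFunLike.congr_fun h y
        simp only [powMonoidHom_apply] at hy2
        rw [← hy, ← pow_mul, ← pow_add, ← two_mul]
        exact hy2.symm
      -- key functional equations
      set u : GaloisField p n → GaloisField p n := fun y => ψα' (α * y ^ p ^ k + α ^ p ^ k * y) with hu_def
      have hA : ∀ y : GaloisField p n, β * y ^ p ^ k + β ^ p ^ k * y =
          β' * (u y) ^ p ^ k + β' ^ p ^ k * u y := by
        intro y
        have := H (α * y ^ p ^ k + α ^ p ^ k * y)
        rwa [hψα2] at this
      have hC : ∀ y : GaloisField p n, α' * (u y) ^ p ^ k + α' ^ p ^ k * u y =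
          α * y ^ p ^ k + α ^ p ^ k * y := fun y => hψα'1 _
      set D := α' * β' ^ p ^ k - β' * α' ^ p ^ k with hD_def
      have hE : ∀ y : GaloisField p n, (α' * β - α * β') * y ^ p ^ k +
          (α' * β ^ p ^ k - α ^ p ^ k * β') * y = D * u y := by
        intro y
        linear_combination α' * hA y + β' * hC y
      by_cases hD : D = 0
      · -- case (1)
        left
        have hE0 : ∀ y : GaloisField p n, (α' * β - α * β') * y ^ p ^ k +
            (α' * β ^ p ^ k - α ^ p ^ k * β') * y = 0 := by
          intro y
          rw [hE y, hD, zero_mul]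
        obtain ⟨c1z, c2z⟩ := aux_li2 (powMonoidHom (p ^ k) : GaloisField p n →* GaloisField p n) (powMonoidHom 1)
          (Ne.symm hne01) _ _ (fun x => by
            simp only [powMonoidHom_apply, pow_one]; exact hE0 x)
        have heq : α⁻¹ * β = α'⁻¹ * β' := by
          rw [inv_mul_eq_div, inv_mul_eq_div, div_eq_div_iff hα hα']
          linear_combination c1z
        refine ⟨?_, heq⟩
        have h3 : α' * (β ^ p ^ k * α - α ^ p ^ k * β) = 0 := by
          linear_combination α * c2z - α ^ p ^ k * c1z
        have hbq0 : β ^ p ^ k * α = α ^ p ^ k * β := by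
          rcases mul_eq_zero.mp h3 with h | h
          · exact absurd h hα'
          · linear_combination h
        rw [mul_pow, inv_pow]
        rw [inv_mul_eq_div, inv_mul_eq_div, div_eq_div_iff (pow_ne_zero _ hα) hα]
        linear_combination hbq0
      · -- case (2)
        right
        obtain ⟨a, ha_def⟩ : ∃ a, a = D⁻¹ * (α' * β - α * β') := ⟨_, rfl⟩
        obtain ⟨b, hb_def⟩ : ∃ b, b = D⁻¹ * (α' * β ^ p ^ k - α ^ p ^ k * β') := ⟨_, rfl⟩
        have hu : ∀ y : GaloisField p n, u y = a * y ^ p ^ k + b * y := by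
          intro y
          have h := hE y
          have hD1 : D * D⁻¹ = 1 := mul_inv_cancel₀ hD
          apply mul_left_cancel₀ hD
          rw [ha_def, hb_def]
          linear_combination -h - ((α' * β - α * β') * y ^ p ^ k +
            (α' * β ^ p ^ k - α ^ p ^ k * β') * y) * hD1
        have hkey : ∀ y : GaloisField p n, (α' * a ^ p ^ k) * y ^ p ^ (2 * k) +
            (α' * b ^ p ^ k + α' ^ p ^ k * a - α) * y ^ p ^ k +
            (α' ^ p ^ k * b - α ^ p ^ k) * y = 0 := by
          intro y
          have h1 := hC y
          rw [hu y] at h1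
          have hexp : (a * y ^ p ^ k + b * y) ^ p ^ k =
              a ^ p ^ k * y ^ p ^ (2 * k) + b ^ p ^ k * y ^ p ^ k := by
            rw [add_pow_char_pow, mul_pow, mul_pow, ← pow_mul, ← pow_add, ← two_mul]
          rw [hexp] at h1
          linear_combination h1
        obtain ⟨e2, e1, e0⟩ := aux_li3 (powMonoidHom (p ^ (2 * k)) : GaloisField p n →* GaloisField p n)
          (powMonoidHom (p ^ k)) (powMonoidHom 1)
          (Ne.symm hne12) (Ne.symm hne02) (Ne.symm hne01) _ _ _
          (fun x => by
            simp only [powMonoidHom_apply, pow_one]; exact hkey x)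
        have ha0 : a = 0 := by
          rcases mul_eq_zero.mp e2 with h | h
          · exact absurd h hα'
          · exact pow_eq_zero_iff (pow_ne_zero k (Fact.out (p := p.Prime)).pos.ne') |>.mp h
        have hc1z : α' * β - α * β' = 0 := by
          have := ha0
          rw [ha_def] at this
          rcases mul_eq_zero.mp this with h | h
          · exact absurd h (inv_ne_zero hD)
          · exact h
        have heq : α⁻¹ * β = α'⁻¹ * β' := by
          rw [inv_mul_eq_div, inv_mul_eq_div, div_eq_div_iff hα hα']
          linear_combination hc1z
        have he1' : α' * b ^ p ^ k = α := by
          rw [ha0] at e1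
          linear_combination e1
        have he0' : α' ^ p ^ k * b = α ^ p ^ k := by
          linear_combination e0
        set t := α * α'⁻¹ with ht_def
        have hb1 : b = t ^ p ^ k := by
          rw [ht_def, mul_pow, inv_pow]
          field_simp
          linear_combination he0'
        have hb2 : b ^ p ^ k = t := by
          rw [ht_def]
          field_simp
          linear_combination he1'
        have ht2 : t ^ p ^ (2 * k) = t := by
          rw [two_mul, pow_add, pow_mul, ← hb1, hb2]
        have ht1 : t ^ p ^ k = t := fix2to1 t ht2
        have hnotfix : ¬(α⁻¹ * β) ^ p ^ k = α⁻¹ * β := by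
          intro hf
          apply hD
          have hβ' : β' = α' * (α⁻¹ * β) := by
            rw [heq]
            field_simp
          rw [hD_def, hβ', mul_pow, hf]
          ring
        refine ⟨hnotfix, heq, α' * α⁻¹, mul_ne_zero hα' (inv_ne_zero hα), ?_, ?_⟩
        · have hct : α' * α⁻¹ = t⁻¹ := by
            rw [ht_def, mul_inv, inv_inv, mul_comm]
          rw [hct, inv_pow, ht1]
        · field_simp
  · -- reverse
    rintro (⟨hfix, heq⟩ | ⟨hnf, heq, c, hc0, hcfix, hca⟩) <;> intro x
    · -- case (1)
      have hβ : β = α * (α⁻¹ * β) := by field_simp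
      have hβ' : β' = α' * (α⁻¹ * β) := by rw [heq]; field_simp
      have hβq : β ^ p ^ k = α ^ p ^ k * (α⁻¹ * β) := by
        conv_lhs => rw [hβ]
        rw [mul_pow, hfix]
      have hβ'q : β' ^ p ^ k = α' ^ p ^ k * (α⁻¹ * β) := by
        rw [hβ', mul_pow, hfix]
      linear_combination (ψα x ^ p ^ k) * hβ + (ψα x) * hβq -
        (ψα' x ^ p ^ k) * hβ' - (ψα' x) * hβ'q +
        (α⁻¹ * β) * hψα1 x - (α⁻¹ * β) * hψα'1 x
    · -- case (2)
      have hcinv : (c⁻¹) ^ p ^ k = c⁻¹ := by rw [inv_pow, hcfix]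
      have hψ' : ψα' x = c⁻¹ * ψα x := by
        have hinj : Function.Injective (fun z : GaloisField p n => α' * z ^ p ^ k + α' ^ p ^ k * z) := by
          intro z w hzw
          have := congrArg ψα' hzw
          simpa only [hψα'2] using this
        apply hinj
        simp only
        rw [hψα'1]
        rw [hca]
        rw [mul_pow, mul_pow, inv_pow, hcfix]
        linear_combination -hψα1 x - (α * ψα x ^ p ^ k + α ^ p ^ k * ψα x) * (mul_inv_cancel₀ hc0)
      have h1 : β' = α' * (α'⁻¹ * β') := by field_simp
      have hβ' : β' = c * β := by
        rw [h1, ← heq, hca]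
        field_simp
      have hβ'q : β' ^ p ^ k = c * β ^ p ^ k := by rw [hβ', mul_pow, hcfix]
      rw [hψ', hβ'q, hβ', mul_pow, inv_pow, hcfix]
      linear_combination (-(β * ψα x ^ p ^ k + β ^ p ^ k * ψα x)) * (mul_inv_cancel₀ hc0)
end
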